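/- Fix ρ ∈ [0,1), d ≥ 1, and let w ∈ ℝ^d be the geometric weight vector w_i = (1−ρ)ρ^{i−1}. For every x ∈ ℝ^d with x_i ≥ 0 for all i, one has ∑_{i=1}^d w_i x_{[i]} = ∑_{s ∈ {0,1}^d} ( ∏_{i=1}^d (1−ρ)^{s_i} ρ^{1−s_i} ) · max_{1 ≤ i ≤ d} (s_i x_i), where x_{[i]} denotes the i-th largest entry of x. Equivalently, w^T sort(x) = E_{s ~ Ber(1−ρ)^{⊗d}}[max_i s_i x_i], where the coordinates of s are independent Bernoulli random variables taking value 1 with probability 1−ρ and 0 with probability ρ. -/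

import Mathlib

/-!
For antitone `y`, `max_i s_i y_i` is `y` at the first index with `s_i = 1`. Conditioning on
`s_0` therefore gives `E = (1 - ρ) y_0 + ρ E'`, where `E'` is the same expectation for the tail
of `y`, and unrolling this recursion produces the geometric weights. Since the law of `s` is
invariant under permuting coordinates, the expectation does not change when `x` is replaced by
its nonincreasing rearrangement.
-/

/-- `sortDesc x i` is the `(i+1)`-th largest entry of `x` (entries arranged in
nonincreasing order). -/
noncomputable def sortDesc {d : ℕ} (x : Fin d → ℝ) : Fin d → ℝ :=
  fun i => x (Tuple.sort x i.rev)

open Finset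

theorem Fin.sum_pi_succ {M α : Type*} [AddCommMonoid M] [Fintype α] [DecidableEq α] {n : ℕ}
    (F : (Fin (n + 1) → α) → M) :
    ∑ s, F s = ∑ a, ∑ t : Fin n → α, F (Fin.cons a t) := by
  rw [← Fintype.sum_prod_type', Fintype.sum_equiv (Fin.consEquiv fun _ => α)]
  intro; rfl

theorem Fin.sup'_univ_succ {α : Type*} [SemilatticeSup α] {n : ℕ} (f : Fin (n + 2) → α) :
    univ.sup' univ_nonempty f =
      f 0 ⊔ univ.sup' univ_nonempty (fun i : Fin (n + 1) => f i.succ) := by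
  rw [sup'_congr univ_nonempty (Fin.univ_succ (n := n + 1)) (fun _ _ => rfl),
    sup'_cons (H := univ_nonempty.map), sup'_map]
  rfl

section

variable {ι κ : Type*} [Fintype ι] [DecidableEq ι] [Fintype κ] [DecidableEq κ]

theorem sum_prod_ite_bool {R : Type*} [CommSemiring R] (p q : R) :
    ∑ s : ι → Bool, ∏ i, (if s i then p else q) = (p + q) ^ Fintype.card ι := by
  rw [← Fintype.prod_sum (κ := fun _ => Bool) fun _ b => if b then p else q]
  simp

noncomputable def bernoulliMaxExpectation [Nonempty ι] (ρ : ℝ) (x : ι → ℝ) : ℝ :=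
  ∑ s : ι → Bool, (∏ i, if s i then 1 - ρ else ρ) *
    univ.sup' univ_nonempty (fun i => (if s i then (1 : ℝ) else 0) * x i)

theorem bernoulliMaxExpectation_comp_equiv [Nonempty ι] [Nonempty κ] (ρ : ℝ) (e : κ ≃ ι)
    (x : ι → ℝ) : bernoulliMaxExpectation ρ (x ∘ e) = bernoulliMaxExpectation ρ x := by
  refine Fintype.sum_equiv (e.arrowCongr (Equiv.refl Bool)) _ _ fun s => ?_
  simp only [sup'_univ_eq_ciSup]
  congr 1
  · exact (e.symm.prod_comp _).symm
  · exact (e.symm.iSup_comp (g := fun i => (if s i then (1 : ℝ) else 0) * x (e i))).symm.trans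
      (by simp)

end

variable {n : ℕ}

theorem sup'_boole_mul_cons_true {y : Fin (n + 1) → ℝ} (t : Fin n → Bool) (hy0 : 0 ≤ y 0)
    (hanti : Antitone y) :
    univ.sup' univ_nonempty
      (fun i => (if (Fin.cons true t : Fin (n + 1) → Bool) i then (1 : ℝ) else 0) * y i) = y 0 := by
  refine le_antisymm (sup'_le _ _ fun i _ => ?_) (le_sup'_of_le _ (mem_univ 0) (by simp))
  split
  · simpa using hanti (Fin.zero_le i)
  · simpa using hy0

theorem sup'_boole_mul_cons_false {y : Fin (n + 2) → ℝ} (t : Fin (n + 1) → Bool)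
    (hy : ∀ i, 0 ≤ y i) :
    univ.sup' univ_nonempty
        (fun i => (if (Fin.cons false t : Fin (n + 2) → Bool) i then (1 : ℝ) else 0) * y i) =
      univ.sup' univ_nonempty (fun i => (if t i then (1 : ℝ) else 0) * y i.succ) := by
  rw [Fin.sup'_univ_succ]
  simp only [Fin.cons_zero, Fin.cons_succ, Bool.false_eq_true, if_false, zero_mul]
  refine sup_eq_right.mpr (le_sup'_of_le _ (mem_univ 0) ?_)
  split <;> simp [hy]

theorem bernoulliMaxExpectation_fin_one (ρ : ℝ) (y : Fin 1 → ℝ) :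
    bernoulliMaxExpectation ρ y = (1 - ρ) * y 0 := by
  simp [bernoulliMaxExpectation, Fin.sum_pi_succ]

theorem bernoulliMaxExpectation_fin_succ_succ (ρ : ℝ) {y : Fin (n + 2) → ℝ}
    (hy : ∀ i, 0 ≤ y i) (hanti : Antitone y) :
    bernoulliMaxExpectation ρ y =
      (1 - ρ) * y 0 + ρ * bernoulliMaxExpectation ρ (fun i : Fin (n + 1) => y i.succ) := by
  rw [bernoulliMaxExpectation, Fin.sum_pi_succ, Fintype.sum_bool]
  simp only [Fin.prod_univ_succ (n := n + 1), Fin.cons_zero, Fin.cons_succ, if_true,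
    Bool.false_eq_true, if_false, sup'_boole_mul_cons_true _ (hy 0) hanti,
    sup'_boole_mul_cons_false _ hy, mul_assoc, ← mul_sum, ← sum_mul, sum_prod_ite_bool,
    sub_add_cancel, one_pow, one_mul]
  rfl

theorem bernoulliMaxExpectation_of_antitone (ρ : ℝ) {y : Fin (n + 1) → ℝ}
    (hy : ∀ i, 0 ≤ y i) (hanti : Antitone y) :
    bernoulliMaxExpectation ρ y = ∑ i : Fin (n + 1), (1 - ρ) * ρ ^ (i : ℕ) * y i := by
  induction n with
  | zero => simp [bernoulliMaxExpectation_fin_one]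
  | succ n ih =>
    rw [bernoulliMaxExpectation_fin_succ_succ ρ hy hanti,
      ih (fun i => hy i.succ) (hanti.comp_monotone Fin.strictMono_succ.monotone),
      Fin.sum_univ_succ (n := n + 1), mul_sum]
    simp only [Fin.val_zero, Fin.val_succ, pow_succ]
    ring_nf

theorem antitone_sortDesc {d : ℕ} (x : Fin d → ℝ) : Antitone (sortDesc x) :=
  fun _ _ hij => Tuple.monotone_sort x (Fin.rev_le_rev.mpr hij)

theorem sortNet_bernoulli_expectation_general
    (ρ : ℝ)
    (d : ℕ) (hd : 0 < d)
    (x : Fin d → ℝ) (hx : ∀ i, 0 ≤ x i) :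
    (∑ i : Fin d, (1 - ρ) * ρ ^ (i : ℕ) * sortDesc x i) =
      ∑ s : Fin d → Bool,
        (∏ i : Fin d, if s i then (1 - ρ) else ρ) *
          Finset.univ.sup'
            (Finset.univ_nonempty_iff.mpr (Fin.pos_iff_nonempty.mp hd))
            (fun i => (if s i then (1 : ℝ) else 0) * x i) := by
  obtain ⟨n, rfl⟩ := Nat.exists_eq_add_one_of_ne_zero hd.ne'
  have hsort : sortDesc x = x ∘ Fin.revPerm.trans (Tuple.sort x) := rfl
  rw [← bernoulliMaxExpectation_of_antitone ρ (y := sortDesc x) (fun _ => hx _)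
      (antitone_sortDesc x), hsort, bernoulliMaxExpectation_comp_equiv]
  rfl

/-- For geometric weights `w_{i+1} = (1−ρ)ρ^i` (0-indexed) and any
`x ∈ ℝᵈ` with nonnegative entries,
`∑_i w_i x_{[i]} = ∑_{s ∈ {0,1}^d} (∏_i (1−ρ)^{s_i} ρ^{1−s_i}) · max_i (s_i x_i)`,
i.e. `wᵀ sort x` is the expectation of `max_i s_i x_i` for i.i.d. Bernoulli(1−ρ)
coordinates `s_i ∈ {0,1}` (encoded here as Booleans, with `s_i x_i` equal to
`x i` if `s i` and `0` otherwise, and factor `1−ρ` if `s i` and `ρ` otherwise). -/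
theorem sortNet_bernoulli_expectation
    (ρ : ℝ) (hρ0 : 0 ≤ ρ) (hρ1 : ρ < 1)
    (d : ℕ) (hd : 0 < d)
    (x : Fin d → ℝ) (hx : ∀ i, 0 ≤ x i) :
    (∑ i : Fin d, (1 - ρ) * ρ ^ (i : ℕ) * sortDesc x i) =
      ∑ s : Fin d → Bool,
        (∏ i : Fin d, if s i then (1 - ρ) else ρ) *
          Finset.univ.sup'
            (Finset.univ_nonempty_iff.mpr (Fin.pos_iff_nonempty.mp hd))
            (fun i => (if s i then (1 : ℝ) else 0) * x i) :=
  sortNet_bernoulli_expectation_general ρ d hd x hx
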